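/- Let ρ̂ be a full-rank density matrix on ℂ^d, let F be a nonempty closed set of density matrices on ℂ^d with R_F(ρ̂) < ∞, let n ≥ 1, and let F_n be a closed set of density matrices on ℂ^{d^n} such that ω^{⊗n} ∈ F_n for every ω ∈ F. Let F' be a set of density matrices on ℂ^{d'} and let (L, G) be a probabilistic free protocol from (F_n, ℂ^{d^n}) to (F', ℂ^{d'}). Suppose p := Tr(L(ρ̂^{⊗n})) > 0 and the output τ := L(ρ̂^{⊗n})/p satisfies ⟨ψ, τ ψ⟩ ≥ 1 − ε for a unit vector ψ ∈ ℂ^{d'} and ε ≥ 0. Then ε/p ≥ λ_min(ρ̂)^n · (1 − f_ψ)/(1 + R_F(ρ̂))^n, where f_ψ := sup_{ω ∈ F'} ⟨ψ, ω ψ⟩. (Theorem 2, probabilistic case: overhead bound n ≥ log_{(1+R(ρ̂))/λ_min(ρ̂)}((1−f_ψ)p/ε).) -/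

import Mathlib

open scoped Matrix ComplexOrder

noncomputable section

/-- A density matrix: a positive semidefinite complex matrix with unit trace. -/
def IsDensity {n : Type*} [Fintype n] (A : Matrix n n ℂ) : Prop :=
  A.PosSemidef ∧ A.trace = 1

/-- The smallest eigenvalue of a Hermitian matrix (`0` by convention otherwise). -/
noncomputable def minEig {n : Type*} [Fintype n] [DecidableEq n] (A : Matrix n n ℂ) : ℝ :=
  letI := Classical.propDecidable A.IsHermitian
  if h : A.IsHermitian then ⨅ i, h.eigenvalues i else 0

/-- The overlap `⟨ψ, A ψ⟩` (as a real number). -/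
noncomputable def overlap {n : Type*} [Fintype n] (A : Matrix n n ℂ) (ψ : n → ℂ) : ℝ :=
  (dotProduct (star ψ) (A.mulVec ψ)).re

/-- `f_ψ = sup_{ω ∈ F} ⟨ψ, ω ψ⟩`, with the convention `sup ∅ = 0`. -/
noncomputable def maxOverlap {n : Type*} [Fintype n] (F : Set (Matrix n n ℂ)) (ψ : n → ℂ) : ℝ :=
  sSup ((fun ω => overlap ω ψ) '' F)

/-- A positive map: it sends positive semidefinite matrices to positive semidefinite matrices. -/
def PosMap {n m : Type*} [Fintype n] [Fintype m]
    (Φ : Matrix n n ℂ →ₗ[ℂ] Matrix m m ℂ) : Prop :=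
  ∀ X, X.PosSemidef → (Φ X).PosSemidef

/-- A trace-preserving map. -/
def TracePreserving {n m : Type*} [Fintype n] [Fintype m]
    (Φ : Matrix n n ℂ →ₗ[ℂ] Matrix m m ℂ) : Prop :=
  ∀ X, (Φ X).trace = X.trace

/-- The feasible set for the generalized robustness:
`{ s ≥ 0 : ∃ density σ, (ρ + sσ)/(1+s) ∈ F }`.  Its nonemptiness encodes `R_F(ρ) < ∞`. -/
def RobustSet {n : Type*} [Fintype n] (F : Set (Matrix n n ℂ)) (ρ : Matrix n n ℂ) : Set ℝ :=
  {s : ℝ | 0 ≤ s ∧ ∃ σ : Matrix n n ℂ, IsDensity σ ∧ (1 + s)⁻¹ • (ρ + s • σ) ∈ F}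

/-- The generalized robustness `R_F(ρ)`. -/
noncomputable def Robustness {n : Type*} [Fintype n] (F : Set (Matrix n n ℂ))
    (ρ : Matrix n n ℂ) : ℝ :=
  sInf (RobustSet F ρ)

/-- The `n`-fold Kronecker power of a `d × d` matrix, realized on the index type
`Fin n → Fin d` (canonically identifying `ℂ^{d^n} ≅ (ℂ^d)^{⊗n}`). -/
noncomputable def kronPow {d : ℕ} (A : Matrix (Fin d) (Fin d) ℂ) (n : ℕ) :
    Matrix (Fin n → Fin d) (Fin n → Fin d) ℂ :=
  Matrix.of fun x y => ∏ i, A (x i) (y i)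

/-!
If `ω = (ρ̂ + sσ)/(1+s)` is free, then `λ_min(ρ̂) ω ≤ ρ̂ ≤ (1+s) ω` in the Loewner order, since a
state lies below `1 ≤ ρ̂/λ_min(ρ̂)`. Tensor powers and the positive map `L` preserve these
inequalities, and `L(ω^{⊗n}) = t ω'` with `ω'` free. Comparing traces gives `p ≤ (1+s)^n t`;
comparing the positive functional `X ↦ Tr X - ⟨ψ, X ψ⟩` gives `λ^n t (1 - ⟨ψ, ω' ψ⟩) ≤ p ε`.
Together, `λ^n (1 - f_ψ) ≤ (1+s)^n ε`. This is a closed condition in `s`, so it passes to the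
infimum `R_F(ρ̂)`, and `p ≤ 1` (the protocol does not create trace) turns `ε` into `ε/p`.
-/

open Matrix
open scoped MatrixOrder

section Loewner

variable {m : Type*} [Fintype m]

lemma overlap_sub (A B : Matrix m m ℂ) (ψ : m → ℂ) :
    overlap (A - B) ψ = overlap A ψ - overlap B ψ := by
  simp [overlap, sub_mulVec]

lemma overlap_smul (r : ℝ) (A : Matrix m m ℂ) (ψ : m → ℂ) :
    overlap (r • A) ψ = r * overlap A ψ := by
  simp [overlap, smul_mulVec, Complex.real_smul]

lemma overlap_mono {A B : Matrix m m ℂ} (h : A ≤ B) (ψ : m → ℂ) : overlap A ψ ≤ overlap B ψ := by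
  have := (Complex.le_def.mp ((le_iff.mp h).dotProduct_mulVec_nonneg ψ)).1
  rw [← overlap, overlap_sub] at this
  simpa using this

lemma trace_re_mono {A B : Matrix m m ℂ} (h : A ≤ B) : A.trace.re ≤ B.trace.re := by
  have := (Complex.le_def.mp (le_iff.mp h).trace_nonneg).1
  simpa [trace_sub] using this

lemma trace_re_smul (r : ℝ) (A : Matrix m m ℂ) : (r • A).trace.re = r * A.trace.re := by
  simp [trace_smul, Complex.real_smul]

variable [DecidableEq m]

lemma overlap_one {ψ : m → ℂ} (hψ : star ψ ⬝ᵥ ψ = 1) : overlap (1 : Matrix m m ℂ) ψ = 1 := by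
  simp [overlap, hψ]

lemma Matrix.IsHermitian.le_smul_one {A : Matrix m m ℂ} (hA : A.IsHermitian) {r : ℝ}
    (h : ∀ i, hA.eigenvalues i ≤ r) : A ≤ r • (1 : Matrix m m ℂ) := by
  rw [← Algebra.algebraMap_eq_smul_one]
  refine le_algebraMap_of_spectrum_le ?_ hA.isSelfAdjoint
  rw [hA.spectrum_real_eq_range_eigenvalues]
  rintro _ ⟨i, rfl⟩
  exact h i

lemma Matrix.IsHermitian.smul_one_le {A : Matrix m m ℂ} (hA : A.IsHermitian) {r : ℝ}
    (h : ∀ i, r ≤ hA.eigenvalues i) : r • (1 : Matrix m m ℂ) ≤ A := by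
  rw [← Algebra.algebraMap_eq_smul_one]
  refine algebraMap_le_of_le_spectrum ?_ hA.isSelfAdjoint
  rw [hA.spectrum_real_eq_range_eigenvalues]
  rintro _ ⟨i, rfl⟩
  exact h i

lemma minEig_smul_one_le {A : Matrix m m ℂ} (hA : A.IsHermitian) :
    minEig A • (1 : Matrix m m ℂ) ≤ A := by
  refine hA.smul_one_le fun i => ?_
  rw [minEig, dif_pos hA]
  exact ciInf_le (Set.finite_range _).bddBelow i

lemma Matrix.PosSemidef.le_trace_re_smul_one {A : Matrix m m ℂ} (hA : A.PosSemidef) :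
    A ≤ A.trace.re • (1 : Matrix m m ℂ) := by
  refine hA.isHermitian.le_smul_one fun i => ?_
  have htr : A.trace.re = ∑ j, hA.isHermitian.eigenvalues j := by
    simp [hA.isHermitian.trace_eq_sum_eigenvalues]
  rw [htr]
  exact Finset.single_le_sum (fun j _ => hA.eigenvalues_nonneg j) (Finset.mem_univ i)

lemma IsDensity.le_one {A : Matrix m m ℂ} (hA : IsDensity A) : A ≤ 1 := by
  simpa [hA.2] using hA.1.le_trace_re_smul_one

lemma overlap_le_trace_re {A : Matrix m m ℂ} (hA : A.PosSemidef) {ψ : m → ℂ}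
    (hψ : star ψ ⬝ᵥ ψ = 1) : overlap A ψ ≤ A.trace.re := by
  simpa [overlap_smul, overlap_one hψ] using overlap_mono hA.le_trace_re_smul_one ψ

lemma trace_re_sub_overlap_mono {A B : Matrix m m ℂ} (h : A ≤ B) {ψ : m → ℂ}
    (hψ : star ψ ⬝ᵥ ψ = 1) : A.trace.re - overlap A ψ ≤ B.trace.re - overlap B ψ := by
  have := overlap_le_trace_re (le_iff.mp h) hψ
  rw [overlap_sub, trace_sub, Complex.sub_re] at this
  linarith

lemma overlap_le_maxOverlap {F : Set (Matrix m m ℂ)} (hF : ∀ ω ∈ F, IsDensity ω) {ψ : m → ℂ}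
    (hψ : star ψ ⬝ᵥ ψ = 1) {ω : Matrix m m ℂ} (hω : ω ∈ F) : overlap ω ψ ≤ maxOverlap F ψ := by
  refine le_csSup ⟨1, ?_⟩ ⟨ω, hω, rfl⟩
  rintro _ ⟨ω, hω, rfl⟩
  simpa [(hF ω hω).2] using overlap_le_trace_re (hF ω hω).1 hψ

end Loewner

section PositiveMaps

variable {m m' : Type*} [Fintype m] [Fintype m']

lemma PosMap.monotone {L : Matrix m m ℂ →ₗ[ℂ] Matrix m' m' ℂ} (hL : PosMap L) : Monotone L :=
  fun A B h => le_iff.mpr (by simpa using hL _ (le_iff.mp h))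

lemma PosMap.trace_re_le {L G : Matrix m m ℂ →ₗ[ℂ] Matrix m' m' ℂ} (hG : PosMap G)
    (hLG : ∀ X, (L X).trace + (G X).trace = X.trace) {X : Matrix m m ℂ} (hX : X.PosSemidef) :
    (L X).trace.re ≤ X.trace.re := by
  have hGX := (Complex.le_def.mp (hG X hX).trace_nonneg).1
  rw [← hLG X, Complex.add_re]
  simp only [Complex.zero_re] at hGX
  linarith

end PositiveMaps

section TensorPower

variable {ι κ : Type*} [Fintype ι]

def piKron (A : ι → Matrix κ κ ℂ) : Matrix (ι → κ) (ι → κ) ℂ :=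
  of fun x y => ∏ i, A i (x i) (y i)

lemma kronPow_eq_piKron {d : ℕ} (A : Matrix (Fin d) (Fin d) ℂ) (n : ℕ) :
    kronPow A n = piKron fun _ => A := rfl

lemma conjTranspose_piKron (A : ι → Matrix κ κ ℂ) : (piKron A)ᴴ = piKron fun i => (A i)ᴴ := by
  ext x y
  simp [piKron, conjTranspose_apply, star_prod]

variable [DecidableEq ι]

lemma piKron_add_eq_sum (D A : ι → Matrix κ κ ℂ) :
    piKron (D + A) = ∑ t : Finset ι, piKron fun i => if i ∈ t then D i else A i := by
  ext x y
  simp only [piKron, of_apply, Matrix.sum_apply, Pi.add_apply, Matrix.add_apply,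
    Fintype.prod_add]
  refine Finset.sum_congr rfl fun t _ => ?_
  rw [← Finset.prod_mul_prod_compl t]
  congr 1 <;> refine Finset.prod_congr rfl fun i hi => ?_ <;> simp_all

variable [Fintype κ]

lemma piKron_mul (A B : ι → Matrix κ κ ℂ) : piKron A * piKron B = piKron (A * B) := by
  ext x y
  simp only [piKron, mul_apply, of_apply, Pi.mul_apply, ← Finset.prod_mul_distrib]
  exact (Fintype.prod_sum fun i k => A i (x i) k * B i k (y i)).symm

lemma trace_piKron (A : ι → Matrix κ κ ℂ) : (piKron A).trace = ∏ i, (A i).trace := by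
  simp only [trace, diag, piKron, of_apply]
  exact (Fintype.prod_sum fun i k => A i k k).symm

variable [DecidableEq κ]

open scoped Matrix.Norms.L2Operator in
lemma Matrix.PosSemidef.piKron {A : ι → Matrix κ κ ℂ} (hA : ∀ i, (A i).PosSemidef) :
    (piKron A).PosSemidef := by
  choose B hB using fun i => CStarAlgebra.nonneg_iff_eq_star_mul_self.mp (hA i).nonneg
  have : A = (fun i => (B i)ᴴ) * B := funext hB
  rw [this, ← piKron_mul, ← conjTranspose_piKron]
  exact posSemidef_conjTranspose_mul_self _

/-- Expanding `⊗ᵢ ((B i - A i) + A i)` gives `⊗ᵢ A i` plus Kronecker products of positive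
factors. -/
lemma piKron_mono {A B : ι → Matrix κ κ ℂ} (hA : ∀ i, 0 ≤ A i) (hAB : ∀ i, A i ≤ B i) :
    piKron A ≤ piKron B := by
  rw [← sub_add_cancel B A, piKron_add_eq_sum, ← Finset.add_sum_erase _ _ (Finset.mem_univ ∅)]
  refine le_add_of_le_of_nonneg (by simp) (Finset.sum_nonneg fun t _ => ?_)
  refine (PosSemidef.piKron fun i => ?_).nonneg
  split_ifs
  · exact le_iff.mp (hAB i)
  · exact (hA i).posSemidef

end TensorPower

section KroneckerPower

variable {d : ℕ}

lemma kronPow_smul (r : ℝ) (A : Matrix (Fin d) (Fin d) ℂ) (n : ℕ) :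
    kronPow (r • A) n = r ^ n • kronPow A n := by
  ext x y
  simp [kronPow, Finset.prod_mul_distrib, Complex.real_smul]

lemma kronPow_mono {A B : Matrix (Fin d) (Fin d) ℂ} (hA : 0 ≤ A) (hAB : A ≤ B) (n : ℕ) :
    kronPow A n ≤ kronPow B n :=
  piKron_mono (fun _ => hA) fun _ => hAB

lemma IsDensity.kronPow {A : Matrix (Fin d) (Fin d) ℂ} (hA : IsDensity A) (n : ℕ) :
    IsDensity (kronPow A n) :=
  ⟨PosSemidef.piKron fun _ => hA.1, by simp [kronPow_eq_piKron, trace_piKron, hA.2]⟩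

end KroneckerPower

lemma exists_sandwich_of_mem_robustSet {m : Type*} [Fintype m] [DecidableEq m]
    {F : Set (Matrix m m ℂ)} (hF : ∀ ω ∈ F, IsDensity ω) {ρ : Matrix m m ℂ} (hρ : ρ.PosSemidef)
    (hminEig : 0 ≤ minEig ρ) {s : ℝ} (hs : s ∈ RobustSet F ρ) :
    ∃ ω ∈ F, ρ ≤ (1 + s) • ω ∧ minEig ρ • ω ≤ ρ := by
  obtain ⟨hs0, σ, hσ, hωF⟩ := hs
  refine ⟨_, hωF, ?_, ?_⟩
  · rw [smul_smul, mul_inv_cancel₀ (by linarith : (0 : ℝ) < 1 + s).ne', one_smul]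
    exact le_add_of_nonneg_right (smul_nonneg hs0 hσ.1.nonneg)
  · calc minEig ρ • _ ≤ minEig ρ • (1 : Matrix m m ℂ) :=
          smul_le_smul_of_nonneg_left (hF _ hωF).le_one hminEig
      _ ≤ ρ := minEig_smul_one_le hρ.isHermitian

lemma exists_free_sandwich_of_mem_robustSet {d d' : ℕ} {F : Set (Matrix (Fin d) (Fin d) ℂ)}
    (hF : ∀ ω ∈ F, IsDensity ω) {ρ : Matrix (Fin d) (Fin d) ℂ} (hρ : ρ.PosSemidef)
    (hminEig : 0 ≤ minEig ρ) {n : ℕ} {Fn : Set (Matrix (Fin n → Fin d) (Fin n → Fin d) ℂ)}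
    (hFn : ∀ ω ∈ F, kronPow ω n ∈ Fn) {F' : Set (Matrix (Fin d') (Fin d') ℂ)}
    {L : Matrix (Fin n → Fin d) (Fin n → Fin d) ℂ →ₗ[ℂ] Matrix (Fin d') (Fin d') ℂ}
    (hL : PosMap L) (hLfree : ∀ ω ∈ Fn, ∃ t : ℝ, 0 ≤ t ∧ ∃ ω' ∈ F', L ω = (t : ℂ) • ω')
    {s : ℝ} (hs : s ∈ RobustSet F ρ) :
    ∃ t : ℝ, ∃ ω' ∈ F', L (kronPow ρ n) ≤ (1 + s) ^ n • t • ω' ∧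
      minEig ρ ^ n • t • ω' ≤ L (kronPow ρ n) := by
  obtain ⟨ω, hωF, hupper, hlower⟩ := exists_sandwich_of_mem_robustSet hF hρ hminEig hs
  obtain ⟨t, -, ω', hω', hLω⟩ := hLfree _ (hFn ω hωF)
  rw [Complex.coe_smul] at hLω
  refine ⟨t, ω', hω', ?_, ?_⟩ <;>
    rw [← hLω, ← L.map_smul_of_tower, ← kronPow_smul] <;>
    refine hL.monotone (kronPow_mono ?_ ?_ n)
  exacts [hρ.nonneg, hupper, smul_nonneg hminEig (hF ω hωF).1.nonneg, hlower]

lemma mul_one_sub_maxOverlap_le {m : Type*} [Fintype m] [DecidableEq m]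
    {F' : Set (Matrix m m ℂ)} (hF' : ∀ ω ∈ F', IsDensity ω) {ψ : m → ℂ}
    (hψ : star ψ ⬝ᵥ ψ = 1) {M ω' : Matrix m m ℂ} (hω' : ω' ∈ F')
    {a b t ε : ℝ} (ha : 0 ≤ a) (hb : 0 ≤ b) (hupper : M ≤ a • t • ω') (hlower : b • t • ω' ≤ M)
    (hM : 0 < M.trace.re) (hfid : (1 - ε) * M.trace.re ≤ overlap M ψ) :
    b * (1 - maxOverlap F' ψ) ≤ a * ε := by
  set p := M.trace.re
  have hω'tr : ω'.trace.re = 1 := by simp [(hF' ω' hω').2]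
  have hpt : p ≤ a * t := by
    simpa [trace_re_smul, hω'tr] using trace_re_mono hupper
  have hloss : b * (t - t * overlap ω' ψ) ≤ p - overlap M ψ := by
    simpa [trace_re_smul, overlap_smul, hω'tr, mul_sub] using trace_re_sub_overlap_mono hlower hψ
  have hf : overlap ω' ψ ≤ maxOverlap F' ψ := overlap_le_maxOverlap hF' hψ hω'
  have h1 : overlap ω' ψ ≤ 1 := hω'tr ▸ overlap_le_trace_re (hF' ω' hω').1 hψ
  refine le_of_mul_le_mul_right ?_ hM
  calc b * (1 - maxOverlap F' ψ) * p ≤ b * (1 - overlap ω' ψ) * (a * t) := by gcongr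
    _ = a * (b * (t - t * overlap ω' ψ)) := by ring
    _ ≤ a * (p - overlap M ψ) := by gcongr
    _ ≤ a * ε * p := by rw [mul_assoc]; gcongr; linarith

theorem distillation_overhead_probabilistic_general {d d' : ℕ}
    (ρhat : Matrix (Fin d) (Fin d) ℂ) (hρ : IsDensity ρhat) (hρfull : 0 < minEig ρhat)
    (F : Set (Matrix (Fin d) (Fin d) ℂ))
    (hFden : ∀ ω ∈ F, IsDensity ω)
    (hRfin : (RobustSet F ρhat).Nonempty)
    (n : ℕ)
    (Fn : Set (Matrix (Fin n → Fin d) (Fin n → Fin d) ℂ))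
    (hFnpow : ∀ ω ∈ F, kronPow ω n ∈ Fn)
    (F' : Set (Matrix (Fin d') (Fin d') ℂ)) (hF'den : ∀ ω ∈ F', IsDensity ω)
    (L G : Matrix (Fin n → Fin d) (Fin n → Fin d) ℂ →ₗ[ℂ] Matrix (Fin d') (Fin d') ℂ)
    (hLpos : PosMap L) (hGpos : PosMap G)
    (hTP : ∀ X, (L X).trace + (G X).trace = X.trace)
    (hLfree : ∀ ω ∈ Fn, ∃ t : ℝ, 0 ≤ t ∧ ∃ ω' ∈ F', L ω = (t : ℂ) • ω')
    (p : ℝ) (hp : p = ((L (kronPow ρhat n)).trace).re) (hppos : 0 < p)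
    (τ : Matrix (Fin d') (Fin d') ℂ) (hτ : τ = p⁻¹ • L (kronPow ρhat n))
    (ψ : Fin d' → ℂ) (hψ : dotProduct (star ψ) ψ = 1)
    (ε : ℝ) (hε : 0 ≤ ε)
    (hfid : 1 - ε ≤ overlap τ ψ) :
    minEig ρhat ^ n * (1 - maxOverlap F' ψ) / (1 + Robustness F ρhat) ^ n ≤ ε / p := by
  have hρn := hρ.kronPow n
  have hp_le_one : p ≤ 1 := by
    simpa [hp, hρn.2] using hGpos.trace_re_le hTP hρn.1
  have hfid' : (1 - ε) * p ≤ overlap (L (kronPow ρhat n)) ψ := by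
    rw [hτ, overlap_smul] at hfid
    rwa [le_inv_mul_iff₀ hppos, mul_comm] at hfid
  have key (s : ℝ) (hs : s ∈ RobustSet F ρhat) :
      minEig ρhat ^ n * (1 - maxOverlap F' ψ) ≤ (1 + s) ^ n * ε := by
    obtain ⟨t, ω', hω', hupper, hlower⟩ :=
      exists_free_sandwich_of_mem_robustSet hFden hρ.1 hρfull.le hFnpow hLpos hLfree hs
    have hs0 : 0 ≤ s := hs.1
    exact mul_one_sub_maxOverlap_le hF'den hψ hω' (by positivity) (by positivity) hupper hlower
      (hp ▸ hppos) (hp ▸ hfid')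
  have hR0 : 0 ≤ Robustness F ρhat := le_csInf hRfin fun s hs => hs.1
  have hR : minEig ρhat ^ n * (1 - maxOverlap F' ψ) ≤ (1 + Robustness F ρhat) ^ n * ε :=
    (isClosed_le continuous_const (by fun_prop : Continuous fun s : ℝ => (1 + s) ^ n * ε)
      |>.closure_subset_iff.mpr key) (csInf_mem_closure hRfin ⟨0, fun s hs => hs.1⟩)
  rw [div_le_iff₀ (by positivity)]
  calc _ ≤ (1 + Robustness F ρhat) ^ n * ε := hR
    _ ≤ ε / p * (1 + Robustness F ρhat) ^ n := by
      rw [mul_comm]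
      gcongr
      exact le_div_self hε hppos hp_le_one

/-- **Theorem 2, probabilistic case.**  Lower bound on the distillation overhead of probabilistic
protocols: `ε/p ≥ λ_min(ρ̂)^n (1 - f_ψ)/(1 + R_F(ρ̂))^n`. -/
theorem distillation_overhead_probabilistic {d d' : ℕ}
    (ρhat : Matrix (Fin d) (Fin d) ℂ) (hρ : IsDensity ρhat) (hρfull : 0 < minEig ρhat)
    (F : Set (Matrix (Fin d) (Fin d) ℂ)) (hFne : F.Nonempty) (hFcl : IsClosed F)
    (hFden : ∀ ω ∈ F, IsDensity ω)
    (hRfin : (RobustSet F ρhat).Nonempty)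
    (n : ℕ) (hn : 1 ≤ n)
    (Fn : Set (Matrix (Fin n → Fin d) (Fin n → Fin d) ℂ)) (hFncl : IsClosed Fn)
    (hFnden : ∀ ω ∈ Fn, IsDensity ω)
    (hFnpow : ∀ ω ∈ F, kronPow ω n ∈ Fn)
    (F' : Set (Matrix (Fin d') (Fin d') ℂ)) (hF'den : ∀ ω ∈ F', IsDensity ω)
    (L G : Matrix (Fin n → Fin d) (Fin n → Fin d) ℂ →ₗ[ℂ] Matrix (Fin d') (Fin d') ℂ)
    (hLpos : PosMap L) (hGpos : PosMap G)
    (hTP : ∀ X, (L X).trace + (G X).trace = X.trace)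
    (hLfree : ∀ ω ∈ Fn, ∃ t : ℝ, 0 ≤ t ∧ ∃ ω' ∈ F', L ω = (t : ℂ) • ω')
    (p : ℝ) (hp : p = ((L (kronPow ρhat n)).trace).re) (hppos : 0 < p)
    (τ : Matrix (Fin d') (Fin d') ℂ) (hτ : τ = p⁻¹ • L (kronPow ρhat n))
    (ψ : Fin d' → ℂ) (hψ : dotProduct (star ψ) ψ = 1)
    (ε : ℝ) (hε : 0 ≤ ε)
    (hfid : 1 - ε ≤ overlap τ ψ) :
    minEig ρhat ^ n * (1 - maxOverlap F' ψ) / (1 + Robustness F ρhat) ^ n ≤ ε / p :=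
  distillation_overhead_probabilistic_general ρhat hρ hρfull F hFden hRfin n Fn hFnpow F' hF'den L G
    hLpos hGpos hTP hLfree p hp hppos τ hτ ψ hψ ε hε hfid
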